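/- Let f_1, f_2 ∈ K[X] (K a field) with f := f_1 − t f_2 ∈ K(t)[X], and let y be a root of f over K(t). If the two-variable polynomial f_1(X) f_2(Y) − f_2(X) f_1(Y) ∈ K[X,Y] factors with irreducible factors of X-degrees 1, 10, 16, then the point stabilizer of Gal(f / K(t)) (acting on the 27 roots of f) has orbits of sizes 1, 10, and 16. -/

import Mathlib

open Polynomial IntermediateField

/-!
Write `E = K(t)(y)` inside the splitting field `L` of `f`. An automorphism of `L/K(t)` fixes `y`
iff it fixes `E`, so the point stabilizer is `Gal(L/E)`, whose orbits on the roots of `f` are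
the root sets of the irreducible factors of `f` over `E`. Since `t = f₁(y)/f₂(y)`, we have
`E = K(y)` with `y` transcendental over `K`, so `E` is a fraction field of `K[Y]` via `Y ↦ y`, and
specializing `Y ↦ y` sends `f₁(X) f₂(Y) − f₂(X) f₁(Y)` to `f₂(y) · f`. By Gauss's lemma its
irreducible factors of positive `X`-degree stay irreducible over `E`, with the same degrees.
-/

theorem stabilizer_eq_fixingSubgroup_adjoin_simple {k L : Type*} [Field k] [Field L]
    [Algebra k L] (y : L) : MulAction.stabilizer Gal(L/k) y = k⟮y⟯.fixingSubgroup := by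
  refine le_antisymm ?_ fun σ hσ ↦ hσ ⟨y, mem_adjoin_simple_self k y⟩
  rw [← le_iff_le, adjoin_simple_le_iff]
  exact fun σ ↦ σ.2

theorem exists_mem_fixingSubgroup_apply_eq_iff {k L : Type*} [Field k] [Field L] [Algebra k L]
    (E : IntermediateField k L) [Normal E L] (z w : L) :
    (∃ σ ∈ E.fixingSubgroup, σ z = w) ↔ minpoly E w = minpoly E z := by
  rw [Normal.minpoly_eq_iff_mem_orbit L]
  constructor
  · rintro ⟨σ, hσ, rfl⟩
    exact ⟨fixingSubgroupEquiv E ⟨σ, hσ⟩, rfl⟩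
  · rintro ⟨τ, rfl⟩
    exact ⟨_, ((fixingSubgroupEquiv E).symm τ).2, rfl⟩

theorem aeval_eq_zero_of_dvd_map {k E A : Type*} [CommSemiring k] [CommSemiring E]
    [CommSemiring A] [Algebra k E] [Algebra E A] [Algebra k A] [IsScalarTower k E A]
    {F : k[X]} {g : E[X]}
    (hg : g ∣ F.map (algebraMap k E)) {x : A} (hx : aeval x g = 0) : aeval x F = 0 := by
  obtain ⟨h, hh⟩ := hg
  rw [← aeval_map_algebraMap E, hh, map_mul, hx, zero_mul]

theorem minpoly_dvd_map_of_mem_rootSet {k E L : Type*} [Field k] [Field E] [Field L]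
    [Algebra k E] [Algebra E L] [Algebra k L] [IsScalarTower k E L] {F : k[X]} {z : L}
    (hz : z ∈ F.rootSet L) : minpoly E z ∣ F.map (algebraMap k E) :=
  minpoly.dvd E z (by rw [aeval_map_algebraMap]; exact (mem_rootSet.1 hz).2)

namespace Polynomial.Gal

variable {k : Type*} [Field k] {F : k[X]}

theorem mem_stabilizer_iff_mem_fixingSubgroup (y : F.rootSet F.SplittingField) (σ : F.Gal) :
    σ ∈ MulAction.stabilizer F.Gal y ↔ σ ∈ k⟮(y : F.SplittingField)⟯.fixingSubgroup := by
  rw [← stabilizer_eq_fixingSubgroup_adjoin_simple]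
  exact Subtype.ext_iff

theorem mem_orbit_stabilizer_iff (y z w : F.rootSet F.SplittingField) :
    w ∈ MulAction.orbit (MulAction.stabilizer F.Gal y) z ↔
      minpoly k⟮(y : F.SplittingField)⟯ (w : F.SplittingField) =
        minpoly k⟮(y : F.SplittingField)⟯ (z : F.SplittingField) := by
  rw [← exists_mem_fixingSubgroup_apply_eq_iff]
  constructor
  · rintro ⟨⟨σ, hσ⟩, rfl⟩
    exact ⟨σ, (mem_stabilizer_iff_mem_fixingSubgroup y σ).1 hσ, rfl⟩
  · rintro ⟨σ, hσ, hσz⟩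
    exact ⟨⟨σ, (mem_stabilizer_iff_mem_fixingSubgroup y σ).2 hσ⟩, Subtype.ext hσz⟩

theorem image_val_orbit_stabilizer (y z : F.rootSet F.SplittingField) :
    Subtype.val '' MulAction.orbit (MulAction.stabilizer F.Gal y) z =
      (minpoly k⟮(y : F.SplittingField)⟯ (z : F.SplittingField)).rootSet F.SplittingField := by
  ext x
  rw [mem_rootSet, Set.mem_image]
  constructor
  · rintro ⟨w, hw, rfl⟩
    rw [← (mem_orbit_stabilizer_iff y z w).1 hw]
    exact ⟨minpoly.ne_zero (Algebra.IsIntegral.isIntegral _), minpoly.aeval _ _⟩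
  · rintro ⟨-, hx⟩
    have hz : IsIntegral k⟮(y : F.SplittingField)⟯ (z : F.SplittingField) :=
      Algebra.IsIntegral.isIntegral _
    have hxF := aeval_eq_zero_of_dvd_map (minpoly_dvd_map_of_mem_rootSet z.2) hx
    refine ⟨⟨x, mem_rootSet.2 ⟨(mem_rootSet.1 z.2).1, hxF⟩⟩, ?_, rfl⟩
    rw [mem_orbit_stabilizer_iff]
    exact (minpoly.eq_of_irreducible_of_monic (minpoly.irreducible hz) hx (minpoly.monic hz)).symm

theorem ncard_orbit_stabilizer (hsep : F.Separable) (y z : F.rootSet F.SplittingField) :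
    (MulAction.orbit (MulAction.stabilizer F.Gal y) z).ncard =
      (minpoly k⟮(y : F.SplittingField)⟯ (z : F.SplittingField)).natDegree := by
  rw [← Set.ncard_image_of_injective _ Subtype.val_injective, image_val_orbit_stabilizer,
    ← Nat.card_coe_set_eq, Nat.card_eq_fintype_card]
  exact card_rootSet_eq_natDegree (hsep.map.of_dvd (minpoly_dvd_map_of_mem_rootSet z.2))
    (Normal.splits inferInstance _)

theorem exists_orbit_stabilizer_of_irreducible_dvd (hsep : F.Separable)
    (y : F.rootSet F.SplittingField) {g : k⟮(y : F.SplittingField)⟯[X]} (hg : Irreducible g)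
    (hdvd : g ∣ F.map (algebraMap k k⟮(y : F.SplittingField)⟯)) :
    ∃ a : F.rootSet F.SplittingField,
      (MulAction.orbit (MulAction.stabilizer F.Gal y) a).ncard = g.natDegree ∧
      ∀ z : F.rootSet F.SplittingField, aeval (z : F.SplittingField) g = 0 →
        MulAction.orbit (MulAction.stabilizer F.Gal y) z =
          MulAction.orbit (MulAction.stabilizer F.Gal y) a := by
  have hF : F ≠ 0 := (mem_rootSet.1 y.2).1
  have hsplits : (g.map (algebraMap _ F.SplittingField)).Splits := by
    refine (SplittingField.splits F).of_dvd (map_ne_zero hF) ?_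
    rw [IsScalarTower.algebraMap_eq k k⟮(y : F.SplittingField)⟯, ← map_map]
    exact Polynomial.map_dvd _ hdvd
  obtain ⟨x, hx⟩ := hsplits.exists_eval_eq_zero (by
    rw [degree_map]; exact (degree_pos_of_irreducible hg).ne')
  rw [eval_map_algebraMap] at hx
  have hminpoly : ∀ z : F.rootSet F.SplittingField, aeval (z : F.SplittingField) g = 0 →
      minpoly k⟮(y : F.SplittingField)⟯ (z : F.SplittingField) = g * C g.leadingCoeff⁻¹ :=
    fun z hz ↦ (minpoly.eq_of_irreducible hg hz).symm
  let a : F.rootSet F.SplittingField :=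
    ⟨x, mem_rootSet.2 ⟨hF, aeval_eq_zero_of_dvd_map hdvd hx⟩⟩
  refine ⟨a, ?_, fun z hz ↦ MulAction.orbit_eq_iff.2 ?_⟩
  · rw [ncard_orbit_stabilizer hsep, hminpoly a hx,
      natDegree_mul_C (inv_ne_zero (leadingCoeff_ne_zero.2 hg.ne_zero))]
  · rw [mem_orbit_stabilizer_iff, hminpoly z hz, hminpoly a hx]

theorem orbits_stabilizer_of_associated_mul (hsep : F.Separable)
    (y : F.rootSet F.SplittingField) {g₁ g₂ g₃ : k⟮(y : F.SplittingField)⟯[X]}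
    (h₁ : Irreducible g₁) (h₂ : Irreducible g₂) (h₃ : Irreducible g₃)
    (hF : Associated (F.map (algebraMap k k⟮(y : F.SplittingField)⟯)) (g₁ * g₂ * g₃)) :
    ∃ a b c : F.rootSet F.SplittingField,
      (MulAction.orbit (MulAction.stabilizer F.Gal y) a).ncard = g₁.natDegree ∧
      (MulAction.orbit (MulAction.stabilizer F.Gal y) b).ncard = g₂.natDegree ∧
      (MulAction.orbit (MulAction.stabilizer F.Gal y) c).ncard = g₃.natDegree ∧
      ∀ z : F.rootSet F.SplittingField,
        MulAction.orbit (MulAction.stabilizer F.Gal y) z =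
            MulAction.orbit (MulAction.stabilizer F.Gal y) a ∨
          MulAction.orbit (MulAction.stabilizer F.Gal y) z =
            MulAction.orbit (MulAction.stabilizer F.Gal y) b ∨
          MulAction.orbit (MulAction.stabilizer F.Gal y) z =
            MulAction.orbit (MulAction.stabilizer F.Gal y) c := by
  have hdvd := hF.symm.dvd
  obtain ⟨a, ha, hza⟩ := exists_orbit_stabilizer_of_irreducible_dvd hsep y h₁
    ((dvd_mul_right _ _).trans ((dvd_mul_right _ _).trans hdvd))
  obtain ⟨b, hb, hzb⟩ := exists_orbit_stabilizer_of_irreducible_dvd hsep y h₂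
    ((dvd_mul_left _ _).trans ((dvd_mul_right _ _).trans hdvd))
  obtain ⟨c, hc, hzc⟩ := exists_orbit_stabilizer_of_irreducible_dvd hsep y h₃
    ((dvd_mul_left _ _).trans hdvd)
  refine ⟨a, b, c, ha, hb, hc, fun z ↦ ?_⟩
  have hz : aeval (z : F.SplittingField) (g₁ * g₂ * g₃) = 0 := by
    obtain ⟨u, hu⟩ := hF
    rw [← hu, map_mul, aeval_map_algebraMap, (mem_rootSet.1 z.2).2, zero_mul]
  simp only [map_mul, mul_eq_zero] at hz
  rcases hz with (h | h) | h
  · exact Or.inl (hza z h)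
  · exact Or.inr (Or.inl (hzb z h))
  · exact Or.inr (Or.inr (hzc z h))

end Polynomial.Gal

theorem Polynomial.isCoprime_of_isPrimitive_map_C_mul_C_sub {K : Type*} [Field K] {f g : K[X]}
    (h : (f.map C * C g - g.map C * C f).IsPrimitive) : IsCoprime f g := by
  rw [← isRelPrime_iff_isCoprime]
  intro d hf hg
  refine h d (dvd_sub ?_ ?_)
  · exact (_root_.map_dvd (C : K[X] →+* K[X][X]) hg).mul_left _
  · exact (_root_.map_dvd (C : K[X] →+* K[X][X]) hf).mul_left _

theorem Polynomial.map_map_C_mul_C_sub {R A : Type*} [CommRing R] [CommRing A] [Algebra R A]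
    (φ : R[X] →ₐ[R] A) {f g : R[X]} {s : A} (h : φ f = s * φ g) :
    (f.map C * C g - g.map C * C f).map (φ : R[X] →+* A) =
      C (φ g) * (f.map (algebraMap R A) - C s * g.map (algebraMap R A)) := by
  have hC : (φ : R[X] →+* A).comp C = algebraMap R A := φ.comp_algebraMap
  simp only [Polynomial.map_sub, Polynomial.map_mul, Polynomial.map_map, map_C, hC]
  simp only [RingHom.coe_coe, h, C_mul]
  ring

theorem Polynomial.irreducible_map_of_forall_eq_div {R E : Type*} [CommRing R] [IsDomain R]
    [IsGCDMonoid R] [Field E] {φ : R →+* E} (hinj : Function.Injective φ)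
    (hdiv : ∀ z, ∃ a b, z = φ a / φ b) {p : R[X]} (hp : Irreducible p)
    (hdeg : p.natDegree ≠ 0) : Irreducible (p.map φ) := by
  let := φ.toAlgebra
  have : FaithfulSMul R E := (faithfulSMul_iff_algebraMap_injective R E).2 hinj
  have : IsFractionRing R E := .of_field R E hdiv
  exact ((hp.isPrimitive hdeg).irreducible_iff_irreducible_map_fraction_map (K := E)).1 hp

section RatFunc

variable {K L : Type*} [Field K] [Field L] [Algebra (RatFunc K) L] [Algebra K L]
  {f₁ f₂ : K[X]} {y : L}

theorem algebraMap_X_mem_adjoin_simple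
    (hy : aeval y f₁ = algebraMap (RatFunc K) L RatFunc.X * aeval y f₂) (h₂ : aeval y f₂ ≠ 0) :
    algebraMap (RatFunc K) L RatFunc.X ∈ K⟮y⟯ :=
  (mem_adjoin_simple_iff K _).2 ⟨f₁, f₂, eq_div_of_mul_eq h₂ hy.symm⟩

variable [IsScalarTower K (RatFunc K) L]

theorem transcendental_of_aeval_eq_X_mul
    (hy : aeval y f₁ = algebraMap (RatFunc K) L RatFunc.X * aeval y f₂) (h₂ : aeval y f₂ ≠ 0) :
    Transcendental K y := by
  intro halg
  have := isAlgebraic_adjoin_simple halg.isIntegral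
  refine (transcendental_algebraMap_iff (algebraMap (RatFunc K) L).injective).2
    RatFunc.transcendental_X ?_
  exact (Algebra.IsAlgebraic.isAlgebraic
    (⟨_, algebraMap_X_mem_adjoin_simple hy h₂⟩ : K⟮y⟯)).algebraMap

theorem exists_eq_aeval_div_of_mem_adjoin_simple
    (hy : aeval y f₁ = algebraMap (RatFunc K) L RatFunc.X * aeval y f₂) (h₂ : aeval y f₂ ≠ 0)
    {z : L} (hz : z ∈ (RatFunc K)⟮y⟯) : ∃ a b : K[X], z = aeval y a / aeval y b := by
  have hrange : (⊤ : IntermediateField K (RatFunc K)).map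
      (IsScalarTower.toAlgHom K (RatFunc K) L) ≤ K⟮y⟯ := by
    rw [← RatFunc.adjoin_X, adjoin_map, Set.image_singleton, adjoin_simple_le_iff]
    exact algebraMap_X_mem_adjoin_simple hy h₂
  have hle : (RatFunc K)⟮y⟯.toSubfield ≤ K⟮y⟯.toSubfield := by
    rw [adjoin_toSubfield, Subfield.closure_le, Set.union_subset_iff, Set.singleton_subset_iff]
    exact ⟨fun _ ⟨u, hu⟩ ↦ hrange ⟨u, trivial, hu⟩, mem_adjoin_simple_self K y⟩
  exact (mem_adjoin_simple_iff K z).1 (hle hz)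

variable (K) in
noncomputable def aevalGen (y : L) : K[X] →ₐ[K] (RatFunc K)⟮y⟯ :=
  aeval (AdjoinSimple.gen (RatFunc K) y)

theorem coe_aevalGen (a : K[X]) : (aevalGen K y a : L) = aeval y a :=
  (aeval_coe _ (AdjoinSimple.gen (RatFunc K) y) a).symm

theorem aevalGen_injective
    (hy : aeval y f₁ = algebraMap (RatFunc K) L RatFunc.X * aeval y f₂) (h₂ : aeval y f₂ ≠ 0) :
    Function.Injective (aevalGen K y) := by
  intro a b hab
  apply transcendental_iff_injective.1 (transcendental_of_aeval_eq_X_mul hy h₂)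
  rw [← coe_aevalGen, hab, coe_aevalGen]

theorem natDegree_map_aevalGen
    (hy : aeval y f₁ = algebraMap (RatFunc K) L RatFunc.X * aeval y f₂) (h₂ : aeval y f₂ ≠ 0)
    (p : K[X][X]) : (p.map (aevalGen K y : K[X] →+* (RatFunc K)⟮y⟯)).natDegree = p.natDegree :=
  natDegree_map_eq_of_injective (aevalGen_injective hy h₂) p

theorem irreducible_map_aevalGen
    (hy : aeval y f₁ = algebraMap (RatFunc K) L RatFunc.X * aeval y f₂) (h₂ : aeval y f₂ ≠ 0)
    {p : K[X][X]} (hp : Irreducible p) (hdeg : p.natDegree ≠ 0) :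
    Irreducible (p.map (aevalGen K y : K[X] →+* (RatFunc K)⟮y⟯)) := by
  refine irreducible_map_of_forall_eq_div (aevalGen_injective hy h₂) (fun z ↦ ?_) hp hdeg
  obtain ⟨a, b, hab⟩ := exists_eq_aeval_div_of_mem_adjoin_simple hy h₂ z.2
  exact ⟨a, b, Subtype.ext (by
    rw [hab, IntermediateField.coe_div, AlgHom.toRingHom_eq_coe, RingHom.coe_coe, coe_aevalGen,
      coe_aevalGen])⟩

theorem map_aevalGen_map_C_mul_C_sub
    (hy : aeval y f₁ = algebraMap (RatFunc K) L RatFunc.X * aeval y f₂) :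
    (f₁.map C * C f₂ - f₂.map C * C f₁).map (aevalGen K y : K[X] →+* (RatFunc K)⟮y⟯) =
      C (aevalGen K y f₂) *
        (f₁.map (algebraMap K (RatFunc K)) - C RatFunc.X * f₂.map (algebraMap K (RatFunc K))).map
          (algebraMap (RatFunc K) (RatFunc K)⟮y⟯) := by
  have h : aevalGen K y f₁ = algebraMap (RatFunc K) (RatFunc K)⟮y⟯ RatFunc.X * aevalGen K y f₂ :=
    Subtype.ext (by rw [IntermediateField.coe_mul, coe_aevalGen, coe_aevalGen, hy]; rfl)
  rw [map_map_C_mul_C_sub _ h, Polynomial.map_sub, Polynomial.map_mul, map_C, Polynomial.map_map,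
    Polynomial.map_map, ← IsScalarTower.algebraMap_eq]

end RatFunc

theorem stabilizer_orbits_from_factorization_general
    {K : Type*} [Field K] (f1 f2 : Polynomial K)
    (F : Polynomial (RatFunc K))
    (hF : F = f1.map (algebraMap K (RatFunc K)) -
      Polynomial.C RatFunc.X * f2.map (algebraMap K (RatFunc K)))
    (hsep : F.Separable)
    (P : Polynomial (Polynomial K))
    (hP : P = f1.map Polynomial.C * Polynomial.C f2 -
      f2.map Polynomial.C * Polynomial.C f1)
    (hfact : ∃ p q r : Polynomial (Polynomial K), P = p * q * r ∧
      Irreducible p ∧ Irreducible q ∧ Irreducible r ∧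
      p.natDegree = 1 ∧ q.natDegree = 10 ∧ r.natDegree = 16) :
    ∀ y : F.rootSet F.SplittingField,
      ∃ a b c : F.rootSet F.SplittingField,
        (MulAction.orbit (MulAction.stabilizer F.Gal y) a).ncard = 1 ∧
        (MulAction.orbit (MulAction.stabilizer F.Gal y) b).ncard = 10 ∧
        (MulAction.orbit (MulAction.stabilizer F.Gal y) c).ncard = 16 ∧
        ∀ z : F.rootSet F.SplittingField,
          MulAction.orbit (MulAction.stabilizer F.Gal y) z =
              MulAction.orbit (MulAction.stabilizer F.Gal y) a ∨
            MulAction.orbit (MulAction.stabilizer F.Gal y) z =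
              MulAction.orbit (MulAction.stabilizer F.Gal y) b ∨
            MulAction.orbit (MulAction.stabilizer F.Gal y) z =
              MulAction.orbit (MulAction.stabilizer F.Gal y) c := by
  classical
  obtain ⟨p, q, r, hPpqr, hp, hq, hr, hp1, hq10, hr16⟩ := hfact
  intro y
  have hy : aeval (y : F.SplittingField) f1 =
      algebraMap (RatFunc K) _ RatFunc.X * aeval (y : F.SplittingField) f2 := by
    have hroot := congrArg (aeval (y : F.SplittingField)) hF
    rwa [(mem_rootSet.1 y.2).2, map_sub, map_mul, aeval_C, aeval_map_algebraMap,
      aeval_map_algebraMap, eq_comm, sub_eq_zero] at hroot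
  have hcop : IsCoprime f1 f2 := by
    refine isCoprime_of_isPrimitive_map_C_mul_C_sub ?_
    rw [← hP, hPpqr]
    exact ((hp.isPrimitive (by omega)).mul (hq.isPrimitive (by omega))).mul
      (hr.isPrimitive (by omega))
  have h₂ : aeval (y : F.SplittingField) f2 ≠ 0 := fun h ↦
    (aeval_ne_zero_of_isCoprime hcop _).elim (· (by rw [hy, h, mul_zero])) (· h)
  have hassoc : Associated (F.map (algebraMap _ (RatFunc K)⟮(y : F.SplittingField)⟯))
      ((p * q * r).map (aevalGen K (y : F.SplittingField) : K[X] →+* _)) := by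
    rw [← hPpqr, hP, map_aevalGen_map_C_mul_C_sub hy, ← hF]
    refine (associated_unit_mul_left _ _ (isUnit_C.2 (Ne.isUnit fun h ↦ h₂ ?_))).symm
    rw [← coe_aevalGen, h, ZeroMemClass.coe_zero]
  rw [Polynomial.map_mul, Polynomial.map_mul] at hassoc
  obtain ⟨a, b, c, ha, hb, hc, hz⟩ := Gal.orbits_stabilizer_of_associated_mul hsep y
    (irreducible_map_aevalGen hy h₂ hp (by omega)) (irreducible_map_aevalGen hy h₂ hq (by omega))
    (irreducible_map_aevalGen hy h₂ hr (by omega)) hassoc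
  rw [natDegree_map_aevalGen hy h₂] at ha hb hc
  exact ⟨a, b, c, ha.trans hp1, hb.trans hq10, hc.trans hr16, hz⟩

/-- let `f = f₁ − t f₂ ∈ K(t)[X]` be separable of degree 27.
If `f₁(X) f₂(Y) − f₂(X) f₁(Y) ∈ K[Y][X]` factors into irreducible factors of
`X`-degrees 1, 10 and 16, then for any root `y` of `f`, the point stabilizer
of `Gal(f/K(t))` at `y` (acting on the roots of `f` in its splitting field)
has orbits of sizes 1, 10 and 16. -/
theorem stabilizer_orbits_from_factorization
    {K : Type*} [Field K] (f1 f2 : Polynomial K)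
    (F : Polynomial (RatFunc K))
    (hF : F = f1.map (algebraMap K (RatFunc K)) -
      Polynomial.C RatFunc.X * f2.map (algebraMap K (RatFunc K)))
    (hdeg : F.natDegree = 27) (hsep : F.Separable)
    (P : Polynomial (Polynomial K))
    (hP : P = f1.map Polynomial.C * Polynomial.C f2 -
      f2.map Polynomial.C * Polynomial.C f1)
    (hfact : ∃ p q r : Polynomial (Polynomial K), P = p * q * r ∧
      Irreducible p ∧ Irreducible q ∧ Irreducible r ∧
      p.natDegree = 1 ∧ q.natDegree = 10 ∧ r.natDegree = 16) :
    ∀ y : F.rootSet F.SplittingField,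
      ∃ a b c : F.rootSet F.SplittingField,
        (MulAction.orbit (MulAction.stabilizer F.Gal y) a).ncard = 1 ∧
        (MulAction.orbit (MulAction.stabilizer F.Gal y) b).ncard = 10 ∧
        (MulAction.orbit (MulAction.stabilizer F.Gal y) c).ncard = 16 ∧
        ∀ z : F.rootSet F.SplittingField,
          MulAction.orbit (MulAction.stabilizer F.Gal y) z =
              MulAction.orbit (MulAction.stabilizer F.Gal y) a ∨
            MulAction.orbit (MulAction.stabilizer F.Gal y) z =
              MulAction.orbit (MulAction.stabilizer F.Gal y) b ∨
            MulAction.orbit (MulAction.stabilizer F.Gal y) z =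
              MulAction.orbit (MulAction.stabilizer F.Gal y) c :=
  stabilizer_orbits_from_factorization_general f1 f2 F hF hsep P hP hfact
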